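/- arXiv:2012.07872 — 7 statements merged into one kernel-verified Lean document; each statement's English description precedes it below -/
import Mathlib

section
/- For any finite network (a finite vertex type V, a symmetric nonnegative capacity function c : V → V → ℝ, and n pairwise distinct boundary vertices b 1, …, b n) there exists a max multiflow: a family of antisymmetric functions f i j : V → V → ℝ (for i < j, extended by f j i = − f i j) with ∑_y f i j x y = 0 at every vertex x ∉ {b i, b j} and ∑_{i<j} |f i j x y| ≤ c x y for all x, y, such that for every index i the net flux ∑_{j ≠ i} ∑_{y} f i j (b i) y out of b i equals the single-party min-cut value S({i}) = min { ∑_{x ∈ W, y ∉ W} c x y : W ⊆ V, W ∩ {b 1,…,b n} = {b i} }. -/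
/-!
Route the commodities along paths of the complete graph on `V`. Nonnegative weights on the paths
from `b i` to `b j` (`i < j`) whose total usage of every edge stays within its capacity form a
multiflow. Its flux out of `b i` is the weight of the paths with an end at `b i`, which is at most
`S({i})` because each of them crosses every cut around `b i`; summed over `i`, these fluxes give
twice the total weight. So it suffices that an optimal weighting has total weight `≥ ½ ∑ S({i})`.

Separating (Hahn–Banach) the scaled simplex of weightings from `{z | z ≤ c}` turns every bound
`T` above the optimum into edge lengths `ℓ ≥ 0` under which every boundary path has length `≥ 1`
and `∑ x, ∑ y, c x y * ℓ x y ≤ 2 T`. The truncated distances `ρ i = min (dist_ℓ (b i) ·) ½` have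
disjoint sublevel sets `{ρ i < ½}`, hence `∑ i, |ρ i x - ρ i y| ≤ ℓ x y`, while the coarea formula
gives `½ S({i}) ≤ ∫₀^½ cut {ρ i < t} dt ≤ ½ ∑ x, ∑ y, c x y * |ρ i x - ρ i y|`.
Together, `∑ S({i}) ≤ 2 T`.
-/

open Finset

namespace SimpleGraph.Walk

variable {V : Type*} {G : SimpleGraph V} {u v w : V}

def lengthBy (ℓ : V → V → ℝ) (p : G.Walk u v) : ℝ :=
  (p.darts.map fun d => ℓ d.fst d.snd).sum

variable {ℓ : V → V → ℝ}

@[simp]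
lemma lengthBy_nil : (nil : G.Walk u u).lengthBy ℓ = 0 := rfl

@[simp]
lemma lengthBy_cons (h : G.Adj u v) (p : G.Walk v w) :
    (cons h p).lengthBy ℓ = ℓ u v + p.lengthBy ℓ := by
  simp [lengthBy]

lemma lengthBy_reverse (hℓ : ∀ x y, ℓ x y = ℓ y x) (p : G.Walk u v) :
    p.reverse.lengthBy ℓ = p.lengthBy ℓ := by
  simp [lengthBy, darts_reverse, Function.comp_def, hℓ]

lemma lengthBy_append (p : G.Walk u v) (q : G.Walk v w) :
    (p.append q).lengthBy ℓ = p.lengthBy ℓ + q.lengthBy ℓ := by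
  simp [lengthBy, darts_append]

lemma lengthBy_concat (p : G.Walk u v) (h : G.Adj v w) :
    (p.concat h).lengthBy ℓ = p.lengthBy ℓ + ℓ v w := by
  simp [lengthBy, darts_concat]

lemma lengthBy_nonneg (hℓ : ∀ x y, 0 ≤ ℓ x y) (p : G.Walk u v) : 0 ≤ p.lengthBy ℓ :=
  List.sum_nonneg (by simpa using fun _ _ => hℓ _ _)

lemma lengthBy_bypass_le [DecidableEq V] (hℓ : ∀ x y, 0 ≤ ℓ x y) (p : G.Walk u v) :
    p.bypass.lengthBy ℓ ≤ p.lengthBy ℓ :=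
  ((darts_bypass_sublist_darts p).map _).sum_le_sum (by simpa using fun _ _ => hℓ _ _)

variable [DecidableEq V]

def dartCount (p : G.Walk u v) (x y : V) : ℕ :=
  p.darts.countP (·.toProd = (x, y))

@[simp]
lemma dartCount_nil (x y : V) : (nil : G.Walk u u).dartCount x y = 0 := rfl

@[simp]
lemma dartCount_cons (h : G.Adj u v) (p : G.Walk v w) (x y : V) :
    (cons h p).dartCount x y = p.dartCount x y + if u = x ∧ v = y then 1 else 0 := by
  simp [dartCount, List.countP_cons]

lemma one_le_dartCount_of_mem {p : G.Walk u v} {d : G.Dart} (hd : d ∈ p.darts) :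
    1 ≤ p.dartCount d.fst d.snd :=
  List.countP_pos_iff.2 ⟨d, hd, by simp⟩

def netFlow (p : G.Walk u v) (x y : V) : ℝ := p.dartCount x y - p.dartCount y x

def usage (p : G.Walk u v) (x y : V) : ℝ := p.dartCount x y + p.dartCount y x

lemma netFlow_swap (p : G.Walk u v) (x y : V) : p.netFlow y x = -p.netFlow x y := by
  simp [netFlow]

lemma usage_nonneg (p : G.Walk u v) (x y : V) : 0 ≤ p.usage x y := by
  unfold usage; positivity

lemma abs_netFlow_le_usage (p : G.Walk u v) (x y : V) : |p.netFlow x y| ≤ p.usage x y := by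
  unfold netFlow usage
  exact (abs_sub _ _).trans (by simp)

lemma one_le_usage_of_mem {p : G.Walk u v} {d : G.Dart} (hd : d ∈ p.darts) :
    1 ≤ p.usage d.fst d.snd ∧ 1 ≤ p.usage d.snd d.fst := by
  have h1 : (1 : ℝ) ≤ p.dartCount d.fst d.snd := by exact_mod_cast one_le_dartCount_of_mem hd
  have h2 : (0 : ℝ) ≤ p.dartCount d.snd d.fst := Nat.cast_nonneg _
  unfold usage
  constructor <;> linarith

variable [Fintype V]

lemma lengthBy_eq_sum_dartCount (ℓ : V → V → ℝ) (p : G.Walk u v) :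
    p.lengthBy ℓ = ∑ x, ∑ y, (p.dartCount x y : ℝ) * ℓ x y := by
  induction p with
  | nil => simp
  | cons h p ih => simp [ih, add_mul, sum_add_distrib, ite_and, add_comm]

lemma sum_usage_mul (p : G.Walk u v) (Y : V → V → ℝ) :
    ∑ x, ∑ y, p.usage x y * Y x y = p.lengthBy fun x y => Y x y + Y y x := by
  simp only [lengthBy_eq_sum_dartCount, usage, add_mul, mul_add, sum_add_distrib]
  exact congrArg _ sum_comm

lemma sum_netFlow (p : G.Walk u v) (x : V) :
    ∑ y, p.netFlow x y = (if u = x then 1 else 0) - if v = x then 1 else 0 := by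
  induction p with
  | nil => simp [netFlow]
  | cons h p ih =>
    simp only [netFlow, sum_sub_distrib, dartCount_cons, Nat.cast_add, Nat.cast_ite,
      Nat.cast_one, Nat.cast_zero, sum_add_distrib, ite_and] at ih ⊢
    simp
    linarith

lemma one_le_sum_usage_of_mem_iff_notMem (p : G.Walk u v) {W : Finset V} (h : u ∈ W ↔ v ∉ W) :
    1 ≤ ∑ x ∈ W, ∑ y ∈ Wᶜ, p.usage x y := by
  obtain ⟨x, hx, y, hy, hxy⟩ : ∃ x ∈ W, ∃ y ∉ W, 1 ≤ p.usage x y := by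
    by_cases hu : u ∈ W
    · obtain ⟨d, hd, hdW, hdW'⟩ := p.exists_boundary_dart W hu (h.1 hu)
      exact ⟨_, hdW, _, hdW', (one_le_usage_of_mem hd).1⟩
    · obtain ⟨d, hd, hdW, hdW'⟩ := p.exists_boundary_dart (↑W)ᶜ hu (by simpa using h.not.1 hu)
      exact ⟨_, not_not.1 hdW', _, hdW, (one_le_usage_of_mem hd).2⟩
  calc 1 ≤ p.usage x y := hxy
    _ ≤ ∑ y ∈ Wᶜ, p.usage x y :=
        single_le_sum (f := fun y => p.usage x y) (fun _ _ => p.usage_nonneg _ _) (mem_compl.2 hy)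
    _ ≤ _ := single_le_sum (f := fun x => ∑ y ∈ Wᶜ, p.usage x y)
        (fun _ _ => sum_nonneg fun _ _ => p.usage_nonneg _ _) hx

end SimpleGraph.Walk

namespace SimpleGraph

variable {V : Type*} (G : SimpleGraph V)

noncomputable def distBy (ℓ : V → V → ℝ) (a x : V) : ℝ :=
  ⨅ p : G.Walk a x, p.lengthBy ℓ

variable {G} {ℓ : V → V → ℝ} (hℓ : ∀ x y, 0 ≤ ℓ x y)
include hℓ

lemma distBy_le {a x : V} (p : G.Walk a x) : G.distBy ℓ a x ≤ p.lengthBy ℓ :=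
  ciInf_le ⟨0, Set.forall_mem_range.2 (Walk.lengthBy_nonneg hℓ)⟩ p

lemma distBy_nonneg (a x : V) : 0 ≤ G.distBy ℓ a x :=
  Real.iInf_nonneg (Walk.lengthBy_nonneg hℓ)

lemma distBy_self (a : V) : G.distBy ℓ a a = 0 :=
  le_antisymm (distBy_le hℓ .nil) (distBy_nonneg hℓ a a)

lemma distBy_le_distBy_add {a x y : V} (hax : G.Reachable a x) (hxy : G.Adj x y) :
    G.distBy ℓ a y ≤ G.distBy ℓ a x + ℓ x y := by
  have : Nonempty (G.Walk a x) := hax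
  rw [← sub_le_iff_le_add]
  refine le_ciInf fun p => ?_
  rw [sub_le_iff_le_add, ← Walk.lengthBy_concat p hxy]
  exact distBy_le hℓ _

lemma one_le_distBy_add_distBy [DecidableEq V] (hsymm : ∀ x y, ℓ x y = ℓ y x) {a a' x : V}
    (hax : G.Reachable a x) (ha'x : G.Reachable a' x)
    (hpath : ∀ p : G.Path a a', 1 ≤ p.1.lengthBy ℓ) :
    1 ≤ G.distBy ℓ a x + G.distBy ℓ a' x := by
  have : Nonempty (G.Walk a x) := hax
  have : Nonempty (G.Walk a' x) := ha'x
  rw [← sub_le_iff_le_add]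
  refine le_ciInf fun p => ?_
  rw [sub_le_iff_le_add, ← sub_le_iff_le_add']
  refine le_ciInf fun q => ?_
  rw [sub_le_iff_le_add', ← Walk.lengthBy_reverse hsymm q, ← Walk.lengthBy_append]
  exact (hpath (p.append q.reverse).toPath).trans (Walk.lengthBy_bypass_le hℓ _)

lemma abs_distBy_top_sub_le (hsymm : ∀ x y, ℓ x y = ℓ y x) (a x y : V) :
    |(⊤ : SimpleGraph V).distBy ℓ a x - (⊤ : SimpleGraph V).distBy ℓ a y| ≤ ℓ x y := by
  rcases eq_or_ne x y with rfl | hxy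
  · simpa using hℓ x x
  have hxy' := distBy_le_distBy_add hℓ (a := a) reachable_top ((top_adj x y).2 hxy)
  have hyx := distBy_le_distBy_add hℓ (a := a) reachable_top ((top_adj y x).2 hxy.symm)
  rw [hsymm y x] at hyx
  exact abs_sub_le_iff.2 ⟨by linarith, by linarith⟩

end SimpleGraph

/-- At most one `i` has `a i < ½` and at most one `j` has `b j < ½`; when `i ≠ j`, only the
terms `½ - a i` and `½ - b j` survive, and `1 ≤ a i + a j ≤ a i + b j + r`. -/
lemma sum_abs_min_sub_min_le {ι : Type*} [Fintype ι] {a b : ι → ℝ} {r : ℝ} (hr : 0 ≤ r)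
    (hab : ∀ i, |a i - b i| ≤ r) (ha : Pairwise fun i j => 1 ≤ a i + a j)
    (hb : Pairwise fun i j => 1 ≤ b i + b j) :
    ∑ i, |min (a i) (1 / 2) - min (b i) (1 / 2)| ≤ r := by
  set t := fun i => |min (a i) (1 / 2) - min (b i) (1 / 2)|
  have ht_le : ∀ i, t i ≤ r := fun i =>
    (abs_min_sub_min_le_max _ _ _ _).trans (by simpa using hab i)
  have ht_zero : ∀ i, 1 / 2 ≤ a i → 1 / 2 ≤ b i → t i = 0 := fun i hai hbi => by
    simp only [t, min_eq_right hai, min_eq_right hbi, sub_self, abs_zero]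
  by_cases hpair : ∃ i j, i ≠ j ∧ a i < 1 / 2 ∧ b j < 1 / 2
  · obtain ⟨i, j, hij, hai, hbj⟩ := hpair
    have ha' : ∀ k ≠ i, 1 / 2 < a k := fun k hk => by linarith [ha hk]
    have hb' : ∀ k ≠ j, 1 / 2 < b k := fun k hk => by linarith [hb hk]
    have hti : t i = 1 / 2 - a i := by
      simp only [t, min_eq_left hai.le, min_eq_right (hb' i hij).le]
      rw [abs_of_neg (by linarith)]; ring
    have htj : t j = 1 / 2 - b j := by
      simp only [t, min_eq_left hbj.le, min_eq_right (ha' j hij.symm).le]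
      rw [abs_of_nonneg (by linarith)]
    rw [Fintype.sum_eq_add i j hij fun k hk => ht_zero k (ha' k hk.1).le (hb' k hk.2).le, hti, htj]
    linarith [ha hij, abs_le.1 (hab j)]
  · push Not at hpair
    have hsupp : ∀ k ∈ univ, t k ≠ 0 → a k < 1 / 2 ∨ b k < 1 / 2 := fun k _ hk => by
      by_contra! h
      exact hk (ht_zero k h.1 h.2)
    have hcard : #{k | a k < 1 / 2 ∨ b k < 1 / 2} ≤ 1 := by
      refine card_le_one.2 fun k hk l hl => ?_
      by_contra hkl
      simp only [mem_filter, mem_univ, true_and] at hk hl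
      rcases hk with hk | hk
      · have := hpair k l hkl hk
        rcases hl with hl | hl
        · linarith [ha hkl]
        · linarith
      · have := hpair l k (Ne.symm hkl)
        rcases hl with hl | hl
        · linarith [this hl]
        · linarith [hb hkl]
    calc ∑ k, t k = ∑ k with a k < 1 / 2 ∨ b k < 1 / 2, t k := (sum_filter_of_ne hsupp).symm
      _ ≤ #{k | a k < 1 / 2 ∨ b k < 1 / 2} • r := sum_le_card_nsmul _ _ _ fun k _ => ht_le k
      _ ≤ 1 • r := nsmul_le_nsmul_left hr hcard
      _ = r := one_nsmul r

section Cuts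

open MeasureTheory SimpleGraph

variable {V : Type*} [Fintype V] [DecidableEq V]

def cutValue (c : V → V → ℝ) (W : Finset V) : ℝ :=
  ∑ x ∈ W, ∑ y ∈ Wᶜ, c x y

lemma cutValue_filter_lt (c : V → V → ℝ) (ρ : V → ℝ) (t : ℝ) :
    cutValue c {x | ρ x < t} = ∑ x, ∑ y, c x y * (Set.Ioc (ρ x) (ρ y)).indicator 1 t := by
  simp only [cutValue, compl_filter, not_lt, sum_filter, Set.indicator_apply, Set.mem_Ioc,
    Pi.one_apply, mul_ite, mul_one, mul_zero]
  exact sum_congr rfl fun x _ => by split_ifs with hx <;> simp [hx]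

theorem mul_le_sum_mul_posPart_of_le_cutValue {c : V → V → ℝ} (hc : ∀ x y, 0 ≤ c x y)
    (ρ : V → ℝ) {h s : ℝ} (hh : 0 ≤ h)
    (hs : ∀ t ∈ Set.Ioc 0 h, s ≤ cutValue c {x | ρ x < t}) :
    h * s ≤ ∑ x, ∑ y, c x y * max (ρ y - ρ x) 0 := by
  have hint : ∀ x y, IntegrableOn (fun t => c x y * (Set.Ioc (ρ x) (ρ y)).indicator 1 t)
      (Set.Ioc 0 h) :=
    fun x y => Integrable.const_mul
      ((integrableOn_const (C := (1 : ℝ)) measure_Ioc_lt_top.ne).indicator measurableSet_Ioc) _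
  calc h * s = ∫ _ in Set.Ioc 0 h, s := by simp [Real.volume_real_Ioc, hh]
    _ ≤ ∫ t in Set.Ioc 0 h, ∑ x, ∑ y, c x y * (Set.Ioc (ρ x) (ρ y)).indicator 1 t :=
        setIntegral_mono_on (integrableOn_const measure_Ioc_lt_top.ne)
          (integrable_finsetSum _ fun x _ => integrable_finsetSum _ fun y _ => hint x y)
          measurableSet_Ioc fun t ht => (hs t ht).trans_eq (cutValue_filter_lt c ρ t)
    _ = ∑ x, ∑ y, c x y * volume.real (Set.Ioc (ρ x) (ρ y) ∩ Set.Ioc 0 h) := by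
        rw [integral_finsetSum _ fun x _ => integrable_finsetSum _ fun y _ => hint x y]
        refine sum_congr rfl fun x _ => ?_
        rw [integral_finsetSum _ fun y _ => hint x y]
        refine sum_congr rfl fun y _ => ?_
        rw [integral_const_mul, integral_indicator_one measurableSet_Ioc,
          measureReal_restrict_apply measurableSet_Ioc]
    _ ≤ ∑ x, ∑ y, c x y * max (ρ y - ρ x) 0 := by
        gcongr with x _ y _
        · exact hc x y
        · rw [← Real.volume_real_Ioc]
          exact measureReal_mono Set.inter_subset_left measure_Ioc_lt_top.ne

omit [DecidableEq V] in
lemma sum_sum_mul_swap {c : V → V → ℝ} (hcs : ∀ x y, c x y = c y x) (g : V → V → ℝ) :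
    ∑ x, ∑ y, c x y * g y x = ∑ x, ∑ y, c x y * g x y := by
  rw [sum_comm]
  simp_rw [hcs]

omit [DecidableEq V] in
lemma sum_mul_abs_sub {c : V → V → ℝ} (hcs : ∀ x y, c x y = c y x) (ρ : V → ℝ) :
    ∑ x, ∑ y, c x y * |ρ x - ρ y| = 2 * ∑ x, ∑ y, c x y * max (ρ y - ρ x) 0 := by
  simp only [← max_zero_add_max_neg_zero_eq_abs_self, neg_sub, mul_add, sum_add_distrib,
    sum_sum_mul_swap hcs fun x y => max (ρ x - ρ y) 0]
  ring

theorem sum_le_sum_mul_of_one_le_lengthBy {c ℓ : V → V → ℝ} (hcs : ∀ x y, c x y = c y x)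
    (hc : ∀ x y, 0 ≤ c x y) (hℓs : ∀ x y, ℓ x y = ℓ y x) (hℓ : ∀ x y, 0 ≤ ℓ x y) {n : ℕ}
    {b : Fin n → V}
    (hpath : ∀ i j, i ≠ j → ∀ p : (⊤ : SimpleGraph V).Path (b i) (b j), 1 ≤ p.1.lengthBy ℓ)
    {s : Fin n → ℝ} (hs : ∀ i (W : Finset V), (∀ k, b k ∈ W ↔ k = i) → s i ≤ cutValue c W) :
    ∑ i, s i ≤ ∑ x, ∑ y, c x y * ℓ x y := by
  set d : Fin n → V → ℝ := fun i => (⊤ : SimpleGraph V).distBy ℓ (b i)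
  have hsep : ∀ x, Pairwise fun i j => 1 ≤ d i x + d j x := fun x i j hij =>
    one_le_distBy_add_distBy hℓ hℓs reachable_top reachable_top (hpath i j hij)
  set ρ : Fin n → V → ℝ := fun i x => min (d i x) (1 / 2)
  have hlevel : ∀ i, ∀ t ∈ Set.Ioc (0 : ℝ) (1 / 2), ∀ k,
      b k ∈ ({x | ρ i x < t} : Finset V) ↔ k = i := by
    intro i t ht k
    simp only [mem_filter, mem_univ, true_and, ρ]
    constructor
    · intro hk
      by_contra hki
      have : 1 ≤ d k (b k) + d i (b k) := hsep (b k) hki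
      rw [show d k (b k) = 0 from distBy_self hℓ _] at this
      linarith [ht.2, min_eq_right (show (1 : ℝ) / 2 ≤ d i (b k) by linarith)]
    · rintro rfl
      simpa [d, distBy_self hℓ] using ht.1
  calc ∑ i, s i = ∑ i, 2 * (1 / 2 * s i) := by simp
    _ ≤ ∑ i, 2 * ∑ x, ∑ y, c x y * max (ρ i y - ρ i x) 0 := by
        gcongr with i
        exact mul_le_sum_mul_posPart_of_le_cutValue hc (ρ i) (by norm_num) fun t ht =>
          hs i _ (hlevel i t ht)
    _ = ∑ x, ∑ y, c x y * ∑ i, |ρ i x - ρ i y| := by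
        simp_rw [← sum_mul_abs_sub hcs, mul_sum]
        rw [sum_comm]
        exact sum_congr rfl fun x _ => sum_comm
    _ ≤ ∑ x, ∑ y, c x y * ℓ x y := by
        gcongr with x _ y _
        · exact hc x y
        · exact sum_abs_min_sub_min_le (hℓ x y) (fun i => abs_distBy_top_sub_le hℓ hℓs _ x y)
            (hsep x) (hsep y)

end Cuts

section PackingLP

open Matrix

variable {ι κ : Type*} [Fintype ι] [Fintype κ]

/-- Feasibility for the packing program maximizing `∑ i, w i`. -/
def IsPacking (A : Matrix ι κ ℝ) (c : κ → ℝ) (w : ι → ℝ) : Prop :=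
  0 ≤ w ∧ w ᵥ* A ≤ c

variable {A : Matrix ι κ ℝ} {c : κ → ℝ}

lemma exists_isPacking_forall_sum_le (hA : ∀ i k, 0 ≤ A i k) (hrow : ∀ i, ∃ k, 1 ≤ A i k)
    (hc : 0 ≤ c) :
    ∃ w, IsPacking A c w ∧ ∀ w', IsPacking A c w' → ∑ i, w' i ≤ ∑ i, w i := by
  have hclosed : IsClosed {w | IsPacking A c w} :=
    (isClosed_le continuous_const continuous_id).inter
      (isClosed_le (vecMulLinear A).continuous_of_finiteDimensional continuous_const)
  have hbdd : {w | IsPacking A c w} ⊆ Set.Icc 0 fun _ => ∑ k, c k := by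
    rintro w ⟨hw0, hwc⟩
    refine ⟨hw0, fun i => ?_⟩
    obtain ⟨k, hk⟩ := hrow i
    calc w i ≤ w i * A i k := le_mul_of_one_le_right (hw0 i) hk
      _ ≤ (w ᵥ* A) k :=
          single_le_sum (f := fun j => w j * A j k) (fun j _ => mul_nonneg (hw0 j) (hA j k))
            (mem_univ i)
      _ ≤ c k := hwc k
      _ ≤ ∑ k, c k := single_le_sum (fun k _ => hc k) (mem_univ k)
  obtain ⟨w, hw, hmax⟩ := (isCompact_Icc.of_isClosed_subset hclosed hbdd).exists_isMaxOn
    ⟨0, le_rfl, by simpa using hc⟩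
    (continuous_finsetSum _ fun i _ => continuous_apply i).continuousOn
  exact ⟨w, hw, fun w' hw' => hmax hw'⟩

lemma StrongDual.exists_nonpos_eq_dotProduct [DecidableEq κ] (f : StrongDual ℝ (κ → ℝ))
    {c : κ → ℝ} {v : ℝ} (hf : ∀ z ∈ Set.Iic c, v < f z) :
    ∃ a : κ → ℝ, a ≤ 0 ∧ ∀ z, f z = z ⬝ᵥ a := by
  set a : κ → ℝ := fun k => f fun j => if k = j then 1 else 0
  refine ⟨a, fun k => ?_, fun z => by simpa [dotProduct] using f.toLinearMap.pi_apply_eq_sum_univ z⟩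
  by_contra! hk
  set t := (f c - v) / a k
  have ht : 0 ≤ t := div_nonneg (by linarith [hf c Set.self_mem_Iic]) hk.le
  have hmem : c - t • (fun j => if k = j then 1 else 0) ∈ Set.Iic c := fun j => by
    simp only [Pi.sub_apply, Pi.smul_apply, smul_eq_mul]
    split_ifs <;> simp [ht]
  have := hf _ hmem
  rw [map_sub, map_smul, smul_eq_mul, div_mul_cancel₀ _ hk.ne'] at this
  linarith

/-- Hahn–Banach separation of the image of the simplex under `w ↦ w ᵥ* (T • A)` from
`{z | z ≤ c}`. -/
lemma exists_dual_le_of_forall_isPacking_lt (hc : 0 ≤ c) {T : ℝ}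
    (hT : ∀ w, IsPacking A c w → ∑ i, w i < T) :
    ∃ y, 0 ≤ y ∧ (∀ i, 1 ≤ (A *ᵥ y) i) ∧ c ⬝ᵥ y ≤ T := by
  classical
  have hT0 : 0 < T := by simpa using hT 0 ⟨le_rfl, by simpa using hc⟩
  have hdisj : Disjoint (vecMulLinear (T • A) '' stdSimplex ℝ ι) (Set.Iic c) := by
    refine Set.disjoint_left.2 ?_
    rintro _ ⟨w, hw, rfl⟩ hwc
    have := hT (T • w) ⟨smul_nonneg hT0.le hw.1, by simpa [smul_vecMul, vecMul_smul] using hwc⟩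
    simp [← mul_sum, hw.2] at this
  obtain ⟨f, u, v, hfK, huv, hfC⟩ := geometric_hahn_banach_compact_closed
    ((convex_stdSimplex ℝ ι).linear_image _)
    ((isCompact_stdSimplex ℝ ι).image (LinearMap.continuous_of_finiteDimensional _))
    (convex_Iic c) isClosed_Iic hdisj
  obtain ⟨a, ha, hf⟩ := f.exists_nonpos_eq_dotProduct hfC
  have hca : v < c ⬝ᵥ a := hf c ▸ hfC c Set.self_mem_Iic
  have hAa : ∀ i, T * (A i ⬝ᵥ a) < u := fun i => by
    simpa [hf, smul_dotProduct] using hfK (T • A i)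
      ⟨Pi.single i 1, single_mem_stdSimplex ℝ i, by simp [vecMulLinear]; rfl⟩
  have hu : 0 < -u := by
    have : 0 ≤ c ⬝ᵥ -a := dotProduct_nonneg_of_nonneg hc (neg_nonneg.2 ha)
    linarith [dotProduct_neg c a]
  refine ⟨(T / -u) • -a, smul_nonneg (div_nonneg hT0.le hu.le) (neg_nonneg.2 ha), fun i => ?_, ?_⟩
  · rw [mulVec_smul, mulVec_neg, Pi.smul_apply, Pi.neg_apply, smul_eq_mul, mulVec,
      div_mul_eq_mul_div, le_div_iff₀ hu]
    linarith [hAa i]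
  · rw [dotProduct_smul, dotProduct_neg, smul_eq_mul, div_mul_eq_mul_div, div_le_iff₀ hu]
    nlinarith

end PackingLP

section Orientation

variable {α : Type*} [DecidableEq α]

/-- The sign with which a path routed from `e.1` to `e.2` contributes to the flow of `(i, j)`. -/
def orient (e : α × α) (i j : α) : ℝ :=
  (if e = (i, j) then 1 else 0) - if e = (j, i) then 1 else 0

def incidence (e : α × α) (i : α) : ℝ :=
  (if e.1 = i then 1 else 0) + if e.2 = i then 1 else 0

lemma orient_swap (e : α × α) (i j : α) : orient e j i = -orient e i j := by
  simp [orient]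

lemma orient_eq_zero {e : α × α} {i j : α} (hij : e ≠ (i, j)) (hji : e ≠ (j, i)) :
    orient e i j = 0 := by
  simp [orient, hij, hji]

variable [Fintype α]

lemma sum_incidence (e : α × α) : ∑ i, incidence e i = 2 := by
  simp only [incidence, sum_add_distrib, sum_ite_eq, mem_univ, if_true]
  norm_num

lemma sum_orient {e : α × α} (he : e.1 ≠ e.2) (i : α) :
    ∑ j with j ≠ i, orient e i j = (if e.1 = i then 1 else 0) - if e.2 = i then 1 else 0 := by
  simp only [orient, sum_sub_distrib, Prod.ext_iff, ite_and, sum_ite_eq, sum_ite_irrel,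
    sum_const_zero, mem_filter, mem_univ, true_and]
  split_ifs <;> simp_all

lemma sum_abs_orient [LinearOrder α] {e : α × α} (he : e.1 < e.2) :
    ∑ p : α × α with p.1 < p.2, |orient e p.1 p.2| = 1 := by
  rw [sum_eq_single_of_mem e (by simpa using he)]
  · simp [orient, Prod.ext_iff, he.ne]
  · intro p hp hpe
    rw [orient_eq_zero (by simpa [eq_comm] using hpe) ?_, abs_zero]
    rintro rfl
    simp at hp
    exact absurd he hp.not_gt

end Orientation

section Multiflow

open Matrix SimpleGraph

variable {V : Type*} [Fintype V] [DecidableEq V] {n : ℕ} (b : Fin n → V)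

abbrev BoundaryPath :=
  Σ e : {e : Fin n × Fin n // e.1 < e.2}, (⊤ : SimpleGraph V).Path (b e.1.1) (b e.1.2)

def usageMatrix : Matrix (BoundaryPath b) (V × V) ℝ :=
  Matrix.of fun q e => q.2.1.usage e.1 e.2

def pathMultiflow (w : BoundaryPath b → ℝ) (i j : Fin n) (x y : V) : ℝ :=
  ∑ q, w q * orient q.1.1 i j * q.2.1.netFlow x y

variable {b}

lemma mulVec_usageMatrix (y : V × V → ℝ) (q : BoundaryPath b) :
    (usageMatrix b *ᵥ y) q = q.2.1.lengthBy fun x x' => y (x, x') + y (x', x) := by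
  rw [← Walk.sum_usage_mul]
  simp [mulVec, dotProduct, usageMatrix, Fintype.sum_prod_type]

omit [Fintype V] in
lemma exists_one_le_usageMatrix (hb : Function.Injective b) (q : BoundaryPath b) :
    ∃ e, 1 ≤ usageMatrix b q e := by
  obtain ⟨d, hd, -, -⟩ := q.2.1.exists_boundary_dart {b q.1.1.1} rfl
    (by simpa using hb.ne q.1.2.ne')
  exact ⟨(d.fst, d.snd), (Walk.one_le_usage_of_mem hd).1⟩

variable (w : BoundaryPath b → ℝ)

lemma pathMultiflow_swap (i j : Fin n) (x y : V) :
    pathMultiflow b w j i x y = -pathMultiflow b w i j x y := by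
  simp only [pathMultiflow, ← sum_neg_distrib]
  exact sum_congr rfl fun q _ => by rw [orient_swap]; ring

lemma pathMultiflow_antisymm (i j : Fin n) (x y : V) :
    pathMultiflow b w i j x y = -pathMultiflow b w i j y x := by
  simp [pathMultiflow, Walk.netFlow_swap _ x y]

lemma sum_pathMultiflow_eq_zero {i j : Fin n} {x : V} (hi : x ≠ b i) (hj : x ≠ b j) :
    ∑ y, pathMultiflow b w i j x y = 0 := by
  simp only [pathMultiflow]
  rw [sum_comm]
  refine sum_eq_zero fun q _ => ?_
  rw [← mul_sum, Walk.sum_netFlow]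
  by_cases hij : q.1.1 = (i, j)
  · simp [Prod.ext_iff.1 hij, hi.symm, hj.symm]
  by_cases hji : q.1.1 = (j, i)
  · simp [Prod.ext_iff.1 hji, hi.symm, hj.symm]
  simp [orient_eq_zero hij hji]

lemma sum_abs_pathMultiflow_le (hw : 0 ≤ w) (x y : V) :
    ∑ p : Fin n × Fin n with p.1 < p.2, |pathMultiflow b w p.1 p.2 x y| ≤
      (w ᵥ* usageMatrix b) (x, y) := by
  calc ∑ p : Fin n × Fin n with p.1 < p.2, |pathMultiflow b w p.1 p.2 x y|
      ≤ ∑ p : Fin n × Fin n with p.1 < p.2, ∑ q, w q * |orient q.1.1 p.1 p.2| * q.2.1.usage x y :=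
        sum_le_sum fun p _ => (abs_sum_le_sum_abs _ _).trans <| sum_le_sum fun q _ => by
          rw [abs_mul, abs_mul, abs_of_nonneg (hw q)]
          exact mul_le_mul_of_nonneg_left (q.2.1.abs_netFlow_le_usage x y)
            (mul_nonneg (hw q) (abs_nonneg _))
    _ = ∑ q, w q * q.2.1.usage x y := by
        rw [sum_comm]
        refine sum_congr rfl fun q _ => ?_
        rw [← sum_mul, ← mul_sum, sum_abs_orient q.1.2, mul_one]
    _ = (w ᵥ* usageMatrix b) (x, y) := by simp [vecMul, dotProduct, usageMatrix]

lemma sum_pathMultiflow_boundary (hb : Function.Injective b) (i : Fin n) :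
    ∑ j with j ≠ i, ∑ y, pathMultiflow b w i j (b i) y =
      ∑ q, w q * incidence q.1.1 i := by
  calc ∑ j with j ≠ i, ∑ y, pathMultiflow b w i j (b i) y
      = ∑ q, w q * (∑ j with j ≠ i, orient q.1.1 i j) * ∑ y, q.2.1.netFlow (b i) y := by
        simp only [pathMultiflow, mul_sum, sum_mul]
        rw [sum_comm]
        conv_rhs => rw [sum_comm]
        exact sum_congr rfl fun _ _ => sum_comm
    _ = _ := by
        refine sum_congr rfl fun q _ => ?_
        rw [sum_orient q.1.2.ne, Walk.sum_netFlow]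
        simp only [hb.eq_iff, incidence]
        have := q.1.2.ne
        split_ifs <;> simp_all

lemma sum_mul_incidence_le_cutValue {c : V → V → ℝ} {w : BoundaryPath b → ℝ}
    (hw : IsPacking (usageMatrix b) (fun e => c e.1 e.2) w) {i : Fin n} {W : Finset V}
    (hW : ∀ k, b k ∈ W ↔ k = i) :
    ∑ q, w q * incidence q.1.1 i ≤
      cutValue c W := by
  calc _ ≤ ∑ q, w q * ∑ x ∈ W, ∑ y ∈ Wᶜ, q.2.1.usage x y := by
        refine sum_le_sum fun q _ => mul_le_mul_of_nonneg_left ?_ (hw.1 q)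
        have hq := q.1.2.ne
        by_cases hi : q.1.1.1 = i ∨ q.1.1.2 = i
        · have := q.2.1.one_le_sum_usage_of_mem_iff_notMem (W := W)
            (by rw [hW, hW]; rcases hi with h | h <;> simp_all [eq_comm])
          rcases hi with rfl | rfl
          · simpa [incidence, hq.symm] using this
          · simpa [incidence, hq] using this
        · push Not at hi
          simpa [incidence, hi.1, hi.2] using sum_nonneg fun x _ => sum_nonneg fun y _ =>
            q.2.1.usage_nonneg x y
    _ = ∑ x ∈ W, ∑ y ∈ Wᶜ, (w ᵥ* usageMatrix b) (x, y) := by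
        simp only [mul_sum, vecMul, dotProduct, usageMatrix, of_apply]
        rw [sum_comm]
        exact sum_congr rfl fun x _ => sum_comm
    _ ≤ cutValue c W := sum_le_sum fun x _ => sum_le_sum fun y _ => hw.2 (x, y)

lemma sum_sum_mul_incidence (w : BoundaryPath b → ℝ) :
    ∑ i, ∑ q, w q * incidence q.1.1 i =
      2 * ∑ q, w q := by
  rw [sum_comm, mul_sum]
  simp only [← mul_sum, sum_incidence, mul_comm]

lemma sum_le_two_mul_of_forall_isPacking_le {c : V → V → ℝ} (hcs : ∀ x y, c x y = c y x)
    (hc : ∀ x y, 0 ≤ c x y) {w : BoundaryPath b → ℝ}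
    (hmax : ∀ w', IsPacking (usageMatrix b) (fun e => c e.1 e.2) w' → ∑ q, w' q ≤ ∑ q, w q)
    {s : Fin n → ℝ} (hs : ∀ i (W : Finset V), (∀ k, b k ∈ W ↔ k = i) → s i ≤ cutValue c W) :
    ∑ i, s i ≤ 2 * ∑ q, w q := by
  suffices h : ∀ T, ∑ q, w q < T → ∑ i, s i ≤ 2 * T by
    have := le_of_forall_gt_imp_ge_of_dense (a₁ := (∑ i, s i) / 2) (a₂ := ∑ q, w q)
      fun T hT => by linarith [h T hT]
    linarith
  intro T hT
  obtain ⟨y, hy0, hyA, hyc⟩ := exists_dual_le_of_forall_isPacking_lt (A := usageMatrix b)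
    (c := fun e => c e.1 e.2) (fun e => hc e.1 e.2) fun w' hw' => (hmax w' hw').trans_lt hT
  set ℓ : V → V → ℝ := fun x x' => y (x, x') + y (x', x)
  have hpath : ∀ i j, i ≠ j → ∀ p : (⊤ : SimpleGraph V).Path (b i) (b j), 1 ≤ p.1.lengthBy ℓ := by
    intro i j hij p
    rcases hij.lt_or_gt with h | h
    · simpa [mulVec_usageMatrix] using hyA ⟨⟨(i, j), h⟩, p⟩
    · simpa [mulVec_usageMatrix, Walk.lengthBy_reverse, add_comm] using
        hyA ⟨⟨(j, i), h⟩, p.reverse⟩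
  calc ∑ i, s i ≤ ∑ x, ∑ x', c x x' * ℓ x x' :=
        sum_le_sum_mul_of_one_le_lengthBy hcs hc (fun _ _ => add_comm _ _)
          (fun _ _ => add_nonneg (hy0 _) (hy0 _)) hpath hs
    _ = 2 * ((fun e => c e.1 e.2) ⬝ᵥ y) := by
        simp only [ℓ, mul_add, sum_add_distrib, dotProduct, Fintype.sum_prod_type,
          sum_sum_mul_swap hcs fun x x' => y (x, x')]
        ring
    _ ≤ 2 * T := by linarith

end Multiflow

lemma exists_isLeast_cutValue {V : Type*} [Fintype V] [DecidableEq V] (c : V → V → ℝ) {n : ℕ}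
    {b : Fin n → V} (hb : Function.Injective b) (i : Fin n) :
    ∃ S, IsLeast {r | ∃ W : Finset V, (∀ k, b k ∈ W ↔ k = i) ∧ r = cutValue c W} S := by
  obtain ⟨r, hr, hmin⟩ := Set.exists_min_image
    {r | ∃ W : Finset V, (∀ k, b k ∈ W ↔ k = i) ∧ r = cutValue c W} id
    ((Set.finite_range (cutValue c)).subset (by rintro _ ⟨W, -, rfl⟩; exact ⟨W, rfl⟩))
    ⟨_, insert (b i) (univ.image b)ᶜ, fun k => by simp [hb.eq_iff], rfl⟩
  exact ⟨r, hr, hmin⟩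

/-- **Existence of a max multiflow** on a finite network: there is a multiflow
(a family of antisymmetric flows `f i j`, extended skew-symmetrically in the
indices, conserved away from its two boundary vertices, and jointly obeying the
capacity bound) whose flux out of each boundary vertex `b i` equals the
single-party min-cut value `S({i})`. -/
theorem max_multiflow_exists {V : Type*} [Fintype V] [DecidableEq V] {n : ℕ}
    (c : V → V → ℝ) (hsym : ∀ x y, c x y = c y x) (hnn : ∀ x y, 0 ≤ c x y)
    (b : Fin n → V) (hb : Function.Injective b) :
    ∃ f : Fin n → Fin n → V → V → ℝ,
      -- extension to all index pairs: `f j i = - f i j`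
      (∀ i j x y, f j i x y = - f i j x y) ∧
      -- each `f i j` is antisymmetric as a flow
      (∀ i j x y, f i j x y = - f i j y x) ∧
      -- flow conservation away from the boundary vertices `b i`, `b j`
      (∀ i j x, x ≠ b i → x ≠ b j → ∑ y, f i j x y = 0) ∧
      -- capacity constraint: `∑_{i<j} |f i j x y| ≤ c x y`
      (∀ x y, ∑ p ∈ univ.filter (fun p : Fin n × Fin n => p.1 < p.2),
          |f p.1 p.2 x y| ≤ c x y) ∧
      -- the flux out of `b i` equals the single-party min-cut value `S({i})`
      (∀ i : Fin n,
        IsLeast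
          { r : ℝ | ∃ W : Finset V, (∀ k : Fin n, b k ∈ W ↔ k = i) ∧
              r = ∑ x ∈ W, ∑ y ∈ Wᶜ, c x y }
          (∑ j ∈ univ.filter (fun j => j ≠ i), ∑ y, f i j (b i) y)) := by
  obtain ⟨w, hw, hmax⟩ := exists_isPacking_forall_sum_le (A := usageMatrix b)
    (c := fun e => c e.1 e.2) (fun q e => q.2.1.usage_nonneg _ _) (exists_one_le_usageMatrix hb)
    fun e => hnn e.1 e.2
  choose S hS using exists_isLeast_cutValue c hb
  have hflux_le : ∀ i, ∑ j with j ≠ i, ∑ y, pathMultiflow b w i j (b i) y ≤ S i := fun i => by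
    obtain ⟨W, hW, hSW⟩ := (hS i).1
    rw [sum_pathMultiflow_boundary w hb, hSW]
    exact sum_mul_incidence_le_cutValue hw hW
  have hflux_sum : ∑ i, S i ≤ ∑ i, ∑ j with j ≠ i, ∑ y, pathMultiflow b w i j (b i) y := by
    simp only [sum_pathMultiflow_boundary w hb, sum_sum_mul_incidence]
    exact sum_le_two_mul_of_forall_isPacking_le hsym hnn hmax fun i W hW => (hS i).2 ⟨W, hW, rfl⟩
  have hflux : ∀ i, ∑ j with j ≠ i, ∑ y, pathMultiflow b w i j (b i) y = S i :=
    fun i => (sum_eq_sum_iff_of_le fun i _ => hflux_le i).1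
      (le_antisymm (sum_le_sum fun i _ => hflux_le i) hflux_sum) i (mem_univ i)
  refine ⟨pathMultiflow b w, pathMultiflow_swap w, pathMultiflow_antisymm w,
    fun i j x => sum_pathMultiflow_eq_zero w,
    fun x y => (sum_abs_pathMultiflow_le w hw.1 x y).trans (hw.2 (x, y)), fun i => ?_⟩
  rw [hflux i]
  exact hS i
end

section
/- Let a finite network have four pairwise distinct boundary vertices b 1, b 2, b 3, b 4 and symmetric nonnegative capacities c, and for each subset I ⊆ {1,2,3,4} let S(I) be the min-cut value S(I) = min { ∑_{x ∈ W, y ∉ W} c x y : W ⊆ V, W ∩ {b 1, b 2, b 3, b 4} = {b i : i ∈ I} }. Then the monogamy of mutual information holds: S({1,2}) + S({1,3}) + S({2,3}) ≥ S({1}) + S({2}) + S({3}) + S({1,2,3}). -/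
open Finset

private lemma mmi_key (P1 P2 P3 Q1 Q2 Q3 : Prop)
    [Decidable P1] [Decidable P2] [Decidable P3]
    [Decidable Q1] [Decidable Q2] [Decidable Q3] :
    |(if P1 ∧ P2 ∧ ¬P3 then (1:ℝ) else 0) - (if Q1 ∧ Q2 ∧ ¬Q3 then (1:ℝ) else 0)| +
    |(if P1 ∧ P3 ∧ ¬P2 then (1:ℝ) else 0) - (if Q1 ∧ Q3 ∧ ¬Q2 then (1:ℝ) else 0)| +
    |(if P2 ∧ P3 ∧ ¬P1 then (1:ℝ) else 0) - (if Q2 ∧ Q3 ∧ ¬Q1 then (1:ℝ) else 0)| +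
    |(if P1 ∨ P2 ∨ P3 then (1:ℝ) else 0) - (if Q1 ∨ Q2 ∨ Q3 then (1:ℝ) else 0)| ≤
    |(if P1 then (1:ℝ) else 0) - (if Q1 then (1:ℝ) else 0)| +
    |(if P2 then (1:ℝ) else 0) - (if Q2 then (1:ℝ) else 0)| +
    |(if P3 then (1:ℝ) else 0) - (if Q3 then (1:ℝ) else 0)| := by
  by_cases h1 : P1 <;> by_cases h2 : P2 <;> by_cases h3 : P3 <;>
    by_cases h4 : Q1 <;> by_cases h5 : Q2 <;> by_cases h6 : Q3 <;>
    simp [h1, h2, h3, h4, h5, h6] <;> norm_num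

/-- **Monogamy of mutual information for min-cuts on a network**: if `S I` is
the min-cut value separating the boundary vertices `{b i : i ∈ I}` from the
rest (characterized by `IsLeast`), then
`S({1,2}) + S({1,3}) + S({2,3}) ≥ S({1}) + S({2}) + S({3}) + S({1,2,3})`. -/
theorem mmi_for_mincuts {V : Type*} [Fintype V] [DecidableEq V]
    (c : V → V → ℝ) (hsym : ∀ x y, c x y = c y x) (hnn : ∀ x y, 0 ≤ c x y)
    (b : Fin 4 → V) (hb : Function.Injective b)
    (S : Finset (Fin 4) → ℝ)
    (hS : ∀ I : Finset (Fin 4),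
      IsLeast
        { r : ℝ | ∃ W : Finset V, (∀ k : Fin 4, b k ∈ W ↔ k ∈ I) ∧
            r = ∑ x ∈ W, ∑ y ∈ Wᶜ, c x y }
        (S I)) :
    S {0, 1} + S {0, 2} + S {1, 2} ≥ S {0} + S {1} + S {2} + S {0, 1, 2} := by
  obtain ⟨⟨A, hA, hSA⟩, _⟩ := hS {0, 1}
  obtain ⟨⟨B, hB, hSB⟩, _⟩ := hS {0, 2}
  obtain ⟨⟨C, hC, hSC⟩, _⟩ := hS {1, 2}
  set χ : Finset V → V → ℝ := fun W x => if x ∈ W then 1 else 0 with hχ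
  -- symmetrized form of the cut value
  have cut_eq : ∀ W : Finset V,
      ∑ x, ∑ y, c x y * |χ W x - χ W y| = 2 * ∑ x ∈ W, ∑ y ∈ Wᶜ, c x y := by
    intro W
    have hswap : ∑ x ∈ Wᶜ, ∑ y ∈ W, c x y = ∑ x ∈ W, ∑ y ∈ Wᶜ, c x y := by
      rw [Finset.sum_comm]
      exact Finset.sum_congr rfl fun x _ => Finset.sum_congr rfl fun y _ => hsym y x
    have inner : ∀ x, ∑ y, c x y * |χ W x - χ W y| =
        (∑ y ∈ W, c x y * |χ W x - χ W y|) + ∑ y ∈ Wᶜ, c x y * |χ W x - χ W y| :=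
      fun x => (Finset.sum_add_sum_compl W _).symm
    calc ∑ x, ∑ y, c x y * |χ W x - χ W y|
        = (∑ x ∈ W, ∑ y, c x y * |χ W x - χ W y|) +
          ∑ x ∈ Wᶜ, ∑ y, c x y * |χ W x - χ W y| :=
          (Finset.sum_add_sum_compl W _).symm
      _ = (∑ x ∈ W, ∑ y ∈ Wᶜ, c x y) + ∑ x ∈ Wᶜ, ∑ y ∈ W, c x y := by
          congr 1
          · rw [Finset.sum_congr rfl fun x hx => inner x]
            apply Finset.sum_congr rfl
            intro x hx
            have h0 : ∑ y ∈ W, c x y * |χ W x - χ W y| = 0 := by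
              apply Finset.sum_eq_zero
              intro y hy; simp [hχ, hx, hy]
            rw [h0, zero_add]
            apply Finset.sum_congr rfl
            intro y hy
            rw [Finset.mem_compl] at hy
            simp [hχ, hx, hy]
          · rw [Finset.sum_congr rfl fun x hx => inner x]
            apply Finset.sum_congr rfl
            intro x hx
            rw [Finset.mem_compl] at hx
            have h0 : ∑ y ∈ Wᶜ, c x y * |χ W x - χ W y| = 0 := by
              apply Finset.sum_eq_zero
              intro y hy; rw [Finset.mem_compl] at hy; simp [hχ, hx, hy]
            rw [h0, add_zero]
            apply Finset.sum_congr rfl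
            intro y hy
            simp [hχ, hx, hy]
      _ = 2 * ∑ x ∈ W, ∑ y ∈ Wᶜ, c x y := by rw [hswap]; ring
  -- the four derived cuts
  set Z1 : Finset V := (A ∩ B) \ C with hZ1
  set Z2 : Finset V := (A ∩ C) \ B with hZ2
  set Z3 : Finset V := (B ∩ C) \ A with hZ3
  set Z4 : Finset V := A ∪ B ∪ C with hZ4
  -- boundary conditions
  have hbZ1 : ∀ k : Fin 4, b k ∈ Z1 ↔ k ∈ ({0} : Finset (Fin 4)) := by
    intro k
    fin_cases k <;>
      simp [hZ1, Finset.mem_sdiff, Finset.mem_inter, hA, hB, hC] <;> decide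
  have hbZ2 : ∀ k : Fin 4, b k ∈ Z2 ↔ k ∈ ({1} : Finset (Fin 4)) := by
    intro k
    fin_cases k <;>
      simp [hZ2, Finset.mem_sdiff, Finset.mem_inter, hA, hB, hC] <;> decide
  have hbZ3 : ∀ k : Fin 4, b k ∈ Z3 ↔ k ∈ ({2} : Finset (Fin 4)) := by
    intro k
    fin_cases k <;>
      simp [hZ3, Finset.mem_sdiff, Finset.mem_inter, hA, hB, hC] <;> decide
  have hbZ4 : ∀ k : Fin 4, b k ∈ Z4 ↔ k ∈ ({0, 1, 2} : Finset (Fin 4)) := by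
    intro k
    fin_cases k <;>
      simp [hZ4, Finset.mem_union, hA, hB, hC] <;> decide
  have hS1 : S {0} ≤ ∑ x ∈ Z1, ∑ y ∈ Z1ᶜ, c x y := (hS {0}).2 ⟨Z1, hbZ1, rfl⟩
  have hS2 : S {1} ≤ ∑ x ∈ Z2, ∑ y ∈ Z2ᶜ, c x y := (hS {1}).2 ⟨Z2, hbZ2, rfl⟩
  have hS3 : S {2} ≤ ∑ x ∈ Z3, ∑ y ∈ Z3ᶜ, c x y := (hS {2}).2 ⟨Z3, hbZ3, rfl⟩
  have hS4 : S {0, 1, 2} ≤ ∑ x ∈ Z4, ∑ y ∈ Z4ᶜ, c x y := (hS {0, 1, 2}).2 ⟨Z4, hbZ4, rfl⟩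
  -- the main pointwise inequality, summed
  have main : (∑ x ∈ Z1, ∑ y ∈ Z1ᶜ, c x y) + (∑ x ∈ Z2, ∑ y ∈ Z2ᶜ, c x y) +
      (∑ x ∈ Z3, ∑ y ∈ Z3ᶜ, c x y) + (∑ x ∈ Z4, ∑ y ∈ Z4ᶜ, c x y) ≤
      (∑ x ∈ A, ∑ y ∈ Aᶜ, c x y) + (∑ x ∈ B, ∑ y ∈ Bᶜ, c x y) +
      (∑ x ∈ C, ∑ y ∈ Cᶜ, c x y) := by
    have key : ∑ x, ∑ y, c x y * (|χ Z1 x - χ Z1 y| + |χ Z2 x - χ Z2 y| +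
        |χ Z3 x - χ Z3 y| + |χ Z4 x - χ Z4 y|) ≤
        ∑ x, ∑ y, c x y * (|χ A x - χ A y| + |χ B x - χ B y| + |χ C x - χ C y|) := by
      apply Finset.sum_le_sum
      intro x _
      apply Finset.sum_le_sum
      intro y _
      apply mul_le_mul_of_nonneg_left _ (hnn x y)
      have e1 : χ Z1 x = if x ∈ A ∧ x ∈ B ∧ x ∉ C then (1:ℝ) else 0 := by
        simp only [hχ, hZ1, Finset.mem_sdiff, Finset.mem_inter, and_assoc]
      have e1' : χ Z1 y = if y ∈ A ∧ y ∈ B ∧ y ∉ C then (1:ℝ) else 0 := by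
        simp only [hχ, hZ1, Finset.mem_sdiff, Finset.mem_inter, and_assoc]
      have e2 : χ Z2 x = if x ∈ A ∧ x ∈ C ∧ x ∉ B then (1:ℝ) else 0 := by
        simp only [hχ, hZ2, Finset.mem_sdiff, Finset.mem_inter, and_assoc]
      have e2' : χ Z2 y = if y ∈ A ∧ y ∈ C ∧ y ∉ B then (1:ℝ) else 0 := by
        simp only [hχ, hZ2, Finset.mem_sdiff, Finset.mem_inter, and_assoc]
      have e3 : χ Z3 x = if x ∈ B ∧ x ∈ C ∧ x ∉ A then (1:ℝ) else 0 := by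
        simp only [hχ, hZ3, Finset.mem_sdiff, Finset.mem_inter, and_assoc]
      have e3' : χ Z3 y = if y ∈ B ∧ y ∈ C ∧ y ∉ A then (1:ℝ) else 0 := by
        simp only [hχ, hZ3, Finset.mem_sdiff, Finset.mem_inter, and_assoc]
      have e4 : χ Z4 x = if x ∈ A ∨ x ∈ B ∨ x ∈ C then (1:ℝ) else 0 := by
        simp only [hχ, hZ4, Finset.mem_union, or_assoc]
      have e4' : χ Z4 y = if y ∈ A ∨ y ∈ B ∨ y ∈ C then (1:ℝ) else 0 := by
        simp only [hχ, hZ4, Finset.mem_union, or_assoc]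
      rw [e1, e1', e2, e2', e3, e3', e4, e4']
      simpa [hχ] using mmi_key (x ∈ A) (x ∈ B) (x ∈ C) (y ∈ A) (y ∈ B) (y ∈ C)
    have expand : ∀ (f g h i : V → ℝ),
        ∑ x, ∑ y, c x y * (|f x - f y| + |g x - g y| + |h x - h y| + |i x - i y|) =
        (∑ x, ∑ y, c x y * |f x - f y|) + (∑ x, ∑ y, c x y * |g x - g y|) +
        (∑ x, ∑ y, c x y * |h x - h y|) + (∑ x, ∑ y, c x y * |i x - i y|) := by
      intro f g h i
      simp only [mul_add, Finset.sum_add_distrib]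
    have expand3 : ∀ (f g h : V → ℝ),
        ∑ x, ∑ y, c x y * (|f x - f y| + |g x - g y| + |h x - h y|) =
        (∑ x, ∑ y, c x y * |f x - f y|) + (∑ x, ∑ y, c x y * |g x - g y|) +
        (∑ x, ∑ y, c x y * |h x - h y|) := by
      intro f g h
      simp only [mul_add, Finset.sum_add_distrib]
    rw [expand (χ Z1) (χ Z2) (χ Z3) (χ Z4), expand3 (χ A) (χ B) (χ C),
      cut_eq, cut_eq, cut_eq, cut_eq, cut_eq, cut_eq, cut_eq] at key
    linarith
  rw [hSA, hSB, hSC]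
  linarith
end

section
/- Let N be a 4-party thread configuration and let S : Finset (Fin 4) → ℝ satisfy: S({i}) = V({i}) for every singleton {i} (saturation of the single-party entropies by the hypergraph max multiflow), S(I) ≥ V(I) for every 2-element subset I, and S({A,B,C}) = V({D}) (purity of the 4-party state together with single-party saturation for the purifier D). Then S({A,B}) + S({A,C}) + S({B,C}) ≥ S({A}) + S({B}) + S({C}) + S({A,B,C}) − N({A,B,C,D}); equivalently, the tripartite information I₃ = S(A) + S(B) + S(C) + S(ABC) − S(AB) − S(AC) − S(BC) is bounded above by the number N_4 = N({A,B,C,D}) of 4-threads. -/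
open Finset

/-- The subflow flux `V(I)` of a thread configuration `N`: the total number of
threads with at least one endpoint in `I` and at least one endpoint in `Iᶜ`. -/
noncomputable def subflowFlux {n : ℕ} (N : Finset (Fin n) → ℝ)
    (I : Finset (Fin n)) : ℝ :=
  ∑ T ∈ univ.filter
      (fun T : Finset (Fin n) => (T ∩ I).Nonempty ∧ (T ∩ Iᶜ).Nonempty), N T

/-- If a hypergraph max multiflow saturates the single-party entropies,
bounds the two-party entropies from below, and the state is pure
(`S({A,B,C}) = V({D})`), then the tripartite information is bounded by the
number of 4-threads:
`S({A,B}) + S({A,C}) + S({B,C})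
  ≥ S({A}) + S({B}) + S({C}) + S({A,B,C}) − N({A,B,C,D})`. -/
theorem mmi_violation_bounded_by_fourthreads (N : Finset (Fin 4) → ℝ)
    (hnn : ∀ T, 0 ≤ N T)
    (hlow : ∀ T : Finset (Fin 4), T.card ≤ 1 → N T = 0)
    (S : Finset (Fin 4) → ℝ)
    (hsingle : ∀ i : Fin 4, S {i} = subflowFlux N {i})
    (hpair : ∀ I : Finset (Fin 4), I.card = 2 → S I ≥ subflowFlux N I)
    (hpure : S {0, 1, 2} = subflowFlux N {3}) :
    S {0, 1} + S {0, 2} + S {1, 2}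
      ≥ S {0} + S {1} + S {2} + S {0, 1, 2} - N {0, 1, 2, 3} := by
  have key : subflowFlux N {0} + subflowFlux N {1} + subflowFlux N {2}
      + subflowFlux N {3}
      ≤ subflowFlux N {0,1} + subflowFlux N {0,2} + subflowFlux N {1,2}
        + N {0,1,2,3} := by
    have hN4 : N {0,1,2,3} = ∑ T ∈ (univ : Finset (Finset (Fin 4))),
        if T = {0,1,2,3} then N T else 0 := by
      rw [Finset.sum_ite_eq' univ ({0,1,2,3} : Finset (Fin 4)) N]
      simp
    simp only [subflowFlux, Finset.sum_filter, hN4, ← Finset.sum_add_distrib]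
    apply Finset.sum_le_sum
    intro T _
    have h0 := hnn T
    fin_cases T <;>
      simp_all (config := {decide := true}) []
  have h01 := hpair {0,1} (by decide)
  have h02 := hpair {0,2} (by decide)
  have h12 := hpair {1,2} (by decide)
  have e0 := hsingle 0
  have e1 := hsingle 1
  have e2 := hsingle 2
  linarith
end

section
/- Let N be a 4-party thread configuration with N({A,B,C,D}) = 0, and let S : Finset (Fin 4) → ℝ satisfy S({i}) = V({i}) for every singleton {i}, S(I) ≥ V(I) for every 2-element subset I, and S({A,B,C}) = V({D}). Then monogamy of mutual information holds: S({A,B}) + S({A,C}) + S({B,C}) ≥ S({A}) + S({B}) + S({C}) + S({A,B,C}). -/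
open Finset

/-- If a 4-party thread configuration has no 4-threads (`N({A,B,C,D}) = 0`),
saturates the single-party entropies, bounds the two-party entropies from
below, and the state is pure (`S({A,B,C}) = V({D})`), then monogamy of mutual
information holds:
`S({A,B}) + S({A,C}) + S({B,C}) ≥ S({A}) + S({B}) + S({C}) + S({A,B,C})`. -/
theorem mmi_of_no_fourthreads (N : Finset (Fin 4) → ℝ)
    (hnn : ∀ T, 0 ≤ N T)
    (hlow : ∀ T : Finset (Fin 4), T.card ≤ 1 → N T = 0)
    (h4 : N {0, 1, 2, 3} = 0)
    (S : Finset (Fin 4) → ℝ)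
    (hsingle : ∀ i : Fin 4, S {i} = subflowFlux N {i})
    (hpair : ∀ I : Finset (Fin 4), I.card = 2 → S I ≥ subflowFlux N I)
    (hpure : S {0, 1, 2} = subflowFlux N {3}) :
    S {0, 1} + S {0, 2} + S {1, 2}
      ≥ S {0} + S {1} + S {2} + S {0, 1, 2} := by
  have key : subflowFlux N {0,1} + subflowFlux N {0,2} + subflowFlux N {1,2}
      = subflowFlux N {0} + subflowFlux N {1} + subflowFlux N {2}
        + subflowFlux N {3} := by
    simp only [subflowFlux, Finset.sum_filter, ← Finset.sum_add_distrib]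
    apply Finset.sum_congr rfl
    intro T _
    fin_cases T <;>
      simp_all (config := { decide := true }) [hlow] <;> exact h4
  have h01 := hpair {0, 1} (by decide)
  have h02 := hpair {0, 2} (by decide)
  have h12 := hpair {1, 2} (by decide)
  rw [hsingle 0, hsingle 1, hsingle 2, hpure]
  linarith
end

section
/- Let N be a 5-party thread configuration with parties A, B, C, D, E. Then (V({A,B}) + V({A,C}) + V({A,D}) + V({B,C}) + V({B,D})) − (V({A}) + V({B}) + V({C,D}) + V({C,E}) + V({D,E})) = 2(N({A,B}) + N({C,D})) + N({A,B,C}) + N({A,B,D}) + N({A,B,E}) + N({A,C,D}) + N({B,C,D}) + N({C,D,E}) + N({B,C,D,E}) + N({A,C,D,E}); in particular this difference is nonnegative. -/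
open Finset

private def ingCoefL (T : Finset (Fin 5)) : ℤ :=
  (if (T ∩ ({0,1} : Finset (Fin 5))).Nonempty ∧ (T ∩ ({0,1} : Finset (Fin 5))ᶜ).Nonempty then 1 else 0)
  + (if (T ∩ ({0,2} : Finset (Fin 5))).Nonempty ∧ (T ∩ ({0,2} : Finset (Fin 5))ᶜ).Nonempty then 1 else 0)
  + (if (T ∩ ({0,3} : Finset (Fin 5))).Nonempty ∧ (T ∩ ({0,3} : Finset (Fin 5))ᶜ).Nonempty then 1 else 0)
  + (if (T ∩ ({1,2} : Finset (Fin 5))).Nonempty ∧ (T ∩ ({1,2} : Finset (Fin 5))ᶜ).Nonempty then 1 else 0)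
  + (if (T ∩ ({1,3} : Finset (Fin 5))).Nonempty ∧ (T ∩ ({1,3} : Finset (Fin 5))ᶜ).Nonempty then 1 else 0)
  - (if (T ∩ ({0} : Finset (Fin 5))).Nonempty ∧ (T ∩ ({0} : Finset (Fin 5))ᶜ).Nonempty then 1 else 0)
  - (if (T ∩ ({1} : Finset (Fin 5))).Nonempty ∧ (T ∩ ({1} : Finset (Fin 5))ᶜ).Nonempty then 1 else 0)
  - (if (T ∩ ({2,3} : Finset (Fin 5))).Nonempty ∧ (T ∩ ({2,3} : Finset (Fin 5))ᶜ).Nonempty then 1 else 0)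
  - (if (T ∩ ({2,4} : Finset (Fin 5))).Nonempty ∧ (T ∩ ({2,4} : Finset (Fin 5))ᶜ).Nonempty then 1 else 0)
  - (if (T ∩ ({3,4} : Finset (Fin 5))).Nonempty ∧ (T ∩ ({3,4} : Finset (Fin 5))ᶜ).Nonempty then 1 else 0)

private def ingCoefR (T : Finset (Fin 5)) : ℤ :=
  2 * ((if T = ({0,1} : Finset (Fin 5)) then 1 else 0) + (if T = ({2,3} : Finset (Fin 5)) then 1 else 0))
  + (if T = ({0,1,2} : Finset (Fin 5)) then 1 else 0)
  + (if T = ({0,1,3} : Finset (Fin 5)) then 1 else 0)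
  + (if T = ({0,1,4} : Finset (Fin 5)) then 1 else 0)
  + (if T = ({0,2,3} : Finset (Fin 5)) then 1 else 0)
  + (if T = ({1,2,3} : Finset (Fin 5)) then 1 else 0)
  + (if T = ({2,3,4} : Finset (Fin 5)) then 1 else 0)
  + (if T = ({1,2,3,4} : Finset (Fin 5)) then 1 else 0)
  + (if T = ({0,2,3,4} : Finset (Fin 5)) then 1 else 0)

private lemma ingCoef_eq : ∀ T : Finset (Fin 5), 2 ≤ T.card → ingCoefL T = ingCoefR T := by
  decide

/-- The thread expansion of the Ingleton combination for a 5-party thread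
configuration (parties `A,B,C,D,E = 0,1,2,3,4`):
`(V(AB)+V(AC)+V(AD)+V(BC)+V(BD)) − (V(A)+V(B)+V(CD)+V(CE)+V(DE))
 = 2(N(AB)+N(CD)) + N(ABC)+N(ABD)+N(ABE)+N(ACD)+N(BCD)+N(CDE)+N(BCDE)+N(ACDE)`,
and in particular this difference is nonnegative. -/
theorem ingleton_thread_expansion (N : Finset (Fin 5) → ℝ)
    (hnn : ∀ T, 0 ≤ N T)
    (hlow : ∀ T : Finset (Fin 5), T.card ≤ 1 → N T = 0) :
    (subflowFlux N {0, 1} + subflowFlux N {0, 2} + subflowFlux N {0, 3}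
        + subflowFlux N {1, 2} + subflowFlux N {1, 3})
      - (subflowFlux N {0} + subflowFlux N {1} + subflowFlux N {2, 3}
        + subflowFlux N {2, 4} + subflowFlux N {3, 4})
      = 2 * (N {0, 1} + N {2, 3})
        + N {0, 1, 2} + N {0, 1, 3} + N {0, 1, 4} + N {0, 2, 3} + N {1, 2, 3}
        + N {2, 3, 4} + N {1, 2, 3, 4} + N {0, 2, 3, 4}
    ∧ 0 ≤ (subflowFlux N {0, 1} + subflowFlux N {0, 2} + subflowFlux N {0, 3}
          + subflowFlux N {1, 2} + subflowFlux N {1, 3})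
        - (subflowFlux N {0} + subflowFlux N {1} + subflowFlux N {2, 3}
          + subflowFlux N {2, 4} + subflowFlux N {3, 4}) := by
  have hL : (subflowFlux N {0, 1} + subflowFlux N {0, 2} + subflowFlux N {0, 3}
        + subflowFlux N {1, 2} + subflowFlux N {1, 3})
      - (subflowFlux N {0} + subflowFlux N {1} + subflowFlux N {2, 3}
        + subflowFlux N {2, 4} + subflowFlux N {3, 4})
      = ∑ T : Finset (Fin 5), (ingCoefL T : ℝ) * N T := by
    simp only [subflowFlux, Finset.sum_filter, ← Finset.sum_add_distrib,
      ← Finset.sum_sub_distrib]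
    refine Finset.sum_congr rfl fun T _ => ?_
    simp only [ingCoefL, Int.cast_sub, Int.cast_add, Int.cast_ite, Int.cast_one,
      Int.cast_zero, sub_mul, add_mul, ite_mul, one_mul, zero_mul]
    ring
  have hR : (∑ T : Finset (Fin 5), (ingCoefR T : ℝ) * N T)
      = 2 * (N {0, 1} + N {2, 3})
        + N {0, 1, 2} + N {0, 1, 3} + N {0, 1, 4} + N {0, 2, 3} + N {1, 2, 3}
        + N {2, 3, 4} + N {1, 2, 3, 4} + N {0, 2, 3, 4} := by
    simp only [ingCoefR, Int.cast_add, Int.cast_mul, Int.cast_ofNat, Int.cast_ite,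
      Int.cast_one, Int.cast_zero, add_mul, mul_assoc, ite_mul, one_mul, zero_mul,
      Finset.sum_add_distrib, Finset.sum_ite_eq', Finset.mem_univ, if_true]
    rw [← Finset.mul_sum, Finset.sum_add_distrib,
      Finset.sum_ite_eq' univ ({0,1} : Finset (Fin 5)) N,
      Finset.sum_ite_eq' univ ({2,3} : Finset (Fin 5)) N]
    simp
  have hmid : (∑ T : Finset (Fin 5), (ingCoefL T : ℝ) * N T)
      = ∑ T : Finset (Fin 5), (ingCoefR T : ℝ) * N T := by
    refine Finset.sum_congr rfl fun T _ => ?_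
    rcases le_or_gt T.card 1 with h | h
    · rw [hlow T h]; ring
    · rw [ingCoef_eq T h]
  have key := hL.trans (hmid.trans hR)
  refine ⟨key, ?_⟩
  rw [key]
  linarith [hnn ({0,1} : Finset (Fin 5)), hnn ({2,3} : Finset (Fin 5)),
    hnn ({0,1,2} : Finset (Fin 5)), hnn ({0,1,3} : Finset (Fin 5)),
    hnn ({0,1,4} : Finset (Fin 5)), hnn ({0,2,3} : Finset (Fin 5)),
    hnn ({1,2,3} : Finset (Fin 5)), hnn ({2,3,4} : Finset (Fin 5)),
    hnn ({1,2,3,4} : Finset (Fin 5)), hnn ({0,2,3,4} : Finset (Fin 5))]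
end

section
/- Let N be a 5-party thread configuration with parties A, B, C, D, E, and let S : Finset (Fin 5) → ℝ satisfy S(I) = V(I) for every subset I with |I| ≤ 2 (saturation of the single-party and two-party entropies by the multiflow) and S(I) = S(Iᶜ) for every I (purity). Then Ingleton's inequality holds: S({A,B}) + S({A,C}) + S({A,D}) + S({B,C}) + S({B,D}) ≥ S({A}) + S({B}) + S({C,D}) + S({A,B,C}) + S({A,B,D}). -/
open Finset

private def ind (T I : Finset (Fin 5)) : ℤ :=
  if (T ∩ I).Nonempty ∧ (T ∩ Iᶜ).Nonempty then 1 else 0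

private lemma ingleton_coeff : ∀ T : Finset (Fin 5), 2 ≤ T.card →
    ind T {0} + ind T {1} + ind T {2,3} + ind T {3,4} + ind T {2,4}
      ≤ ind T {0,1} + ind T {0,2} + ind T {0,3} + ind T {1,2} + ind T {1,3} := by
  decide

/-- **Weak Ingleton inequality for hypergraphs**: if the entropies of all
subsets of at most two parties are saturated by the multiflow (`S(I) = V(I)`
for `|I| ≤ 2`) and the state is pure (`S(I) = S(Iᶜ)`), then for parties
`A,B,C,D,E = 0,1,2,3,4`:
`S(AB)+S(AC)+S(AD)+S(BC)+S(BD) ≥ S(A)+S(B)+S(CD)+S(ABC)+S(ABD)`. -/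
theorem weak_ingleton (N : Finset (Fin 5) → ℝ)
    (hnn : ∀ T, 0 ≤ N T)
    (hlow : ∀ T : Finset (Fin 5), T.card ≤ 1 → N T = 0)
    (S : Finset (Fin 5) → ℝ)
    (hsat : ∀ I : Finset (Fin 5), I.card ≤ 2 → S I = subflowFlux N I)
    (hpure : ∀ I : Finset (Fin 5), S I = S Iᶜ) :
    S {0, 1} + S {0, 2} + S {0, 3} + S {1, 2} + S {1, 3}
      ≥ S {0} + S {1} + S {2, 3} + S {0, 1, 2} + S {0, 1, 3} := by
  have h23 : ({0,1,2} : Finset (Fin 5))ᶜ = {3,4} := by decide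
  have h24 : ({0,1,3} : Finset (Fin 5))ᶜ = {2,4} := by decide
  rw [hpure {0,1,2}, hpure {0,1,3}, h23, h24,
    hsat {0,1} (by decide), hsat {0,2} (by decide), hsat {0,3} (by decide),
    hsat {1,2} (by decide), hsat {1,3} (by decide), hsat {0} (by decide),
    hsat {1} (by decide), hsat {2,3} (by decide), hsat {3,4} (by decide),
    hsat {2,4} (by decide)]
  unfold subflowFlux
  simp only [Finset.sum_filter]
  set f : Finset (Fin 5) → Finset (Fin 5) → ℝ := fun I T =>
    if (T ∩ I).Nonempty ∧ (T ∩ Iᶜ).Nonempty then N T else 0 with hf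
  have key : ∀ T ∈ (univ : Finset (Finset (Fin 5))),
      (0:ℝ) ≤ (f {0,1} T + f {0,2} T + f {0,3} T + f {1,2} T + f {1,3} T)
        - (f {0} T + f {1} T + f {2,3} T + f {3,4} T + f {2,4} T) := by
    intro T _
    by_cases hT : T.card ≤ 1
    · simp [hf, hlow T hT]
    · push_neg at hT
      have hc := ingleton_coeff T hT
      have hcast : ((ind T {0} + ind T {1} + ind T {2,3} + ind T {3,4} + ind T {2,4} : ℤ) : ℝ)
          ≤ ((ind T {0,1} + ind T {0,2} + ind T {0,3} + ind T {1,2} + ind T {1,3} : ℤ) : ℝ) :=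
        by exact_mod_cast hc
      simp only [Int.cast_add, ind, apply_ite (Int.cast : ℤ → ℝ), Int.cast_one,
        Int.cast_zero] at hcast
      have he : ∀ (I : Finset (Fin 5)), f I T =
          (if (T ∩ I).Nonempty ∧ (T ∩ Iᶜ).Nonempty then (1:ℝ) else 0) * N T := by
        intro I; simp only [hf]; split <;> simp
      simp only [he]
      nlinarith [mul_nonneg (sub_nonneg.mpr hcast) (hnn T)]
  have hsum := Finset.sum_nonneg key
  rw [Finset.sum_sub_distrib] at hsum
  simp only [Finset.sum_add_distrib] at hsum
  linarith [hsum]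
end

section
/- Fix integers k ≥ 1, l ≥ 1 and n ≥ 2k + l, and let S : Finset (Fin (n+1)) → ℝ be the GHZ entropy function on n+1 parties (S X = 1 if X ≠ ∅ and X ≠ univ, S X = 0 otherwise), with parties A_1, …, A_n identified with the first n elements of Fin (n+1) and the purifier with the last. Then the holographic cyclic inequality fails for S: with indices taken modulo n among A_1, …, A_n, ∑_{i=1}^{n} ( S({A_i, …, A_{i+k+l−1}}) − S({A_{i+l}, …, A_{i+k+l−1}}) ) < S({A_1, …, A_n}); indeed the left-hand side equals 0 while the right-hand side equals 1. -/
open Finset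

/-- The GHZ entropy function on `m` parties: `S X = 1` for every nonempty
proper subset `X`, and `S X = 0` otherwise. -/
noncomputable def ghzEntropy (m : ℕ) (X : Finset (Fin m)) : ℝ :=
  if X ≠ ∅ ∧ X ≠ Finset.univ then 1 else 0


lemma ghzEntropy_eq_one {m : ℕ} {X : Finset (Fin m)} (h1 : X.Nonempty)
    (a : Fin m) (h2 : a ∉ X) : ghzEntropy m X = 1 := by
  unfold ghzEntropy
  rw [if_pos]
  constructor
  · exact h1.ne_empty
  · intro h
    exact h2 (h ▸ Finset.mem_univ a)

/-- The cyclic inequalities of the holographic entropy cone fail for the GHZ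
entropy function: for `k, l ≥ 1` and `n ≥ 2k + l`, with the parties
`A_1, …, A_n` identified with the first `n` elements of `Fin (n+1)` (the last
element being the purifier) and indices taken modulo `n`,
`∑_{i=1}^{n} (S(A_i…A_{i+k+l−1}) − S(A_{i+l}…A_{i+k+l−1})) < S(A_1…A_n)`;
indeed the left-hand side equals `0` while the right-hand side equals `1`. -/
theorem ghz_violates_cyclic_inequality (k l n : ℕ)
    (hk : 1 ≤ k) (hl : 1 ≤ l) (hn : 2 * k + l ≤ n) :
    (∑ i ∈ Finset.range n,
        (ghzEntropy (n + 1) ((Finset.range (k + l)).image (fun t =>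
            (⟨(i + t) % n, Nat.lt_succ_of_lt (Nat.mod_lt _ (by omega))⟩ :
              Fin (n + 1))))
          - ghzEntropy (n + 1) ((Finset.Ico l (k + l)).image (fun t =>
            (⟨(i + t) % n, Nat.lt_succ_of_lt (Nat.mod_lt _ (by omega))⟩ :
              Fin (n + 1))))))
      < ghzEntropy (n + 1) ((Finset.range n).image (fun t =>
          (⟨t % n, Nat.lt_succ_of_lt (Nat.mod_lt _ (by omega))⟩ : Fin (n + 1))))
    ∧ (∑ i ∈ Finset.range n,
        (ghzEntropy (n + 1) ((Finset.range (k + l)).image (fun t =>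
            (⟨(i + t) % n, Nat.lt_succ_of_lt (Nat.mod_lt _ (by omega))⟩ :
              Fin (n + 1))))
          - ghzEntropy (n + 1) ((Finset.Ico l (k + l)).image (fun t =>
            (⟨(i + t) % n, Nat.lt_succ_of_lt (Nat.mod_lt _ (by omega))⟩ :
              Fin (n + 1)))))) = 0
    ∧ ghzEntropy (n + 1) ((Finset.range n).image (fun t =>
          (⟨t % n, Nat.lt_succ_of_lt (Nat.mod_lt _ (by omega))⟩ : Fin (n + 1))))
        = 1 := by
  have hn0 : 0 < n := by omega
  have key : ∀ (s : Finset ℕ) (hs : s.Nonempty) (i : ℕ),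
      ghzEntropy (n + 1) (s.image (fun t =>
        (⟨(i + t) % n, Nat.lt_succ_of_lt (Nat.mod_lt _ (by omega))⟩ :
          Fin (n + 1)))) = 1 := by
    intro s hs i
    apply ghzEntropy_eq_one (hs.image _) ⟨n, Nat.lt_succ_self n⟩
    simp only [Finset.mem_image, not_exists]
    rintro t ⟨ht, hcontra⟩
    have : (i + t) % n = n := congrArg Fin.val hcontra
    have := Nat.mod_lt (i + t) hn0
    omega
  have hsum : (∑ i ∈ Finset.range n,
        (ghzEntropy (n + 1) ((Finset.range (k + l)).image (fun t =>
            (⟨(i + t) % n, Nat.lt_succ_of_lt (Nat.mod_lt _ (by omega))⟩ :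
              Fin (n + 1))))
          - ghzEntropy (n + 1) ((Finset.Ico l (k + l)).image (fun t =>
            (⟨(i + t) % n, Nat.lt_succ_of_lt (Nat.mod_lt _ (by omega))⟩ :
              Fin (n + 1)))))) = 0 := by
    apply Finset.sum_eq_zero
    intro i _
    rw [key _ (by simp; omega) i, key _ (by rw [Finset.nonempty_Ico]; omega) i]
    ring
  have hrhs : ghzEntropy (n + 1) ((Finset.range n).image (fun t =>
      (⟨t % n, Nat.lt_succ_of_lt (Nat.mod_lt _ (by omega))⟩ : Fin (n + 1))))
      = 1 := by
    apply ghzEntropy_eq_one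
      (Finset.Nonempty.image (by rw [Finset.nonempty_range_iff]; omega) _)
      ⟨n, Nat.lt_succ_self n⟩
    simp only [Finset.mem_image, not_exists]
    rintro t ⟨ht, hcontra⟩
    have : t % n = n := congrArg Fin.val hcontra
    have := Nat.mod_lt t hn0
    omega
  exact ⟨by rw [hsum, hrhs]; norm_num, hsum, hrhs⟩
end
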